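/- Convergence of Luxemburg norms along a subsequence under strong L^{p_S}-convergence (norm-convergence fragment of Theorem 2.11): Let p and p_h (h ∈ ℕ) all belong to the class 𝒞 with p_h(x) → p(x) for every x ∈ Ω, and suppose there are constants 1 < p_I and p_S < ∞ such that p_I ≤ p_h(x) ≤ p_S for all h and all x ∈ Ω. If u_h → u strongly in the constant-exponent Lebesgue space L^{p_S}(Ω), then there exists a subsequence (u_{h_n}) such that lim_{n→∞} ‖u_{h_n}‖_{p_{h_n}(x)} = ‖u‖_{p(x)}. -/

import Mathlib

open MeasureTheory Filter Topology

/-- The `p(x)`-modular `ρ_{p(x)}(u) = ∫_Ω |u(x)|^{p(x)} dx`, valued in `ℝ≥0∞`. -/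
noncomputable def pModular {N : ℕ} (Ω : Set (EuclideanSpace ℝ (Fin N)))
    (p u : EuclideanSpace ℝ (Fin N) → ℝ) : ENNReal :=
  ∫⁻ x in Ω, ENNReal.ofReal (|u x| ^ p x)

/-- The Luxemburg norm `‖u‖_{p(x)} = inf {γ > 0 : ρ_{p(x)}(u/γ) ≤ 1}`. -/
noncomputable def luxNorm {N : ℕ} (Ω : Set (EuclideanSpace ℝ (Fin N)))
    (p u : EuclideanSpace ℝ (Fin N) → ℝ) : ℝ :=
  sInf {γ : ℝ | 0 < γ ∧ pModular Ω p (fun x => u x / γ) ≤ 1}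

/-- The class `𝒞` of admissible exponents: `p` extends continuously to the
closure of `Ω`, satisfies `1 < inf_Ω p ≤ p(x) ≤ sup_Ω p < N`, and is
log-Hölder continuous. -/
def InClassC {N : ℕ} (Ω : Set (EuclideanSpace ℝ (Fin N)))
    (p : EuclideanSpace ℝ (Fin N) → ℝ) : Prop :=
  ContinuousOn p (closure Ω) ∧
  (∃ pm pM : ℝ, 1 < pm ∧ pM < (N : ℝ) ∧ ∀ x ∈ Ω, pm ≤ p x ∧ p x ≤ pM) ∧
  (∃ L : ℝ, 0 < L ∧ ∀ x ∈ Ω, ∀ y ∈ Ω, 0 < dist x y → dist x y ≤ 1 / 2 →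
    |p x - p y| ≤ -L / Real.log (dist x y))

/-!
Pass to a subsequence along which `∑ ‖u_h - u‖_{p_S} < ∞`. Along it `u_h → u` a.e. and all
`|u_h|` are dominated by one `g ∈ L^{p_S}`, so dominated convergence (with the bound
`1 + (g/γ)^{p_S}`) gives `ρ_{p_h}(u_h/γ) → ρ_p(u/γ)` for every `γ > 0`. The modular of `u/γ` is
antitone in `γ`, exceeds `1` below `‖u‖_{p(x)}` and, by the scaling
`ρ(u/γ) ≤ (γ'/γ)^{p_I} ρ(u/γ')`, is strictly below `1` above it; so convergence of the modulars
pins the Luxemburg norms `‖u_h‖_{p_h(x)}` down to `‖u‖_{p(x)}`.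
-/

open scoped ENNReal

theorem ENNReal.exists_strictMono_tsum_ne_top {a : ℕ → ℝ≥0∞} (ha : Tendsto a atTop (𝓝 0)) :
    ∃ φ : ℕ → ℕ, StrictMono φ ∧ ∑' n, a (φ n) ≠ ∞ := by
  obtain ⟨φ, hφ, hle⟩ := extraction_forall_of_eventually fun n =>
    ha.eventually_le_const (ENNReal.pow_pos (ENNReal.inv_pos.2 ENNReal.ofNat_ne_top) n :
      (0 : ℝ≥0∞) < 2⁻¹ ^ n)
  refine ⟨φ, hφ, ne_top_of_le_ne_top ?_ (ENNReal.tsum_le_tsum hle)⟩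
  rw [ENNReal.tsum_geometric]
  norm_num

namespace MeasureTheory

variable {α E : Type*} [MeasurableSpace α] {μ : Measure α} [NormedAddCommGroup E]
  {p : ℝ≥0∞} {u : α → E} {v : ℕ → α → E}

theorem ae_tendsto_of_tsum_eLpNorm_sub_ne_top (hp : 1 ≤ p) (hu : AEStronglyMeasurable u μ)
    (hv : ∀ n, AEStronglyMeasurable (v n) μ) (hsum : ∑' n, eLpNorm (v n - u) p μ ≠ ∞) :
    ∀ᵐ x ∂μ, Tendsto (v · x) atTop (𝓝 (u x)) := by
  filter_upwards [summable_norm_of_tsum_eLpNorm_ne_top hp (fun n => (hv n).sub hu) hsum]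
    with x hx
  exact tendsto_iff_norm_sub_tendsto_zero.2 hx.tendsto_atTop_zero

/-- The Riesz–Fischer dominating function `‖u‖ + ∑ ‖v n - u‖`. -/
theorem exists_memLp_dominating_of_tsum_eLpNorm_sub_ne_top (hp : 1 ≤ p) (hu : MemLp u p μ)
    (hv : ∀ n, AEStronglyMeasurable (v n) μ) (hsum : ∑' n, eLpNorm (v n - u) p μ ≠ ∞) :
    ∃ g : α → ℝ, MemLp g p μ ∧ ∀ n, ∀ᵐ x ∂μ, ‖v n x‖ ≤ g x := by
  have hsumm := summable_norm_of_tsum_eLpNorm_ne_top hp (fun n => (hv n).sub hu.1) hsum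
  set G : ℕ → α → ℝ := fun k => (fun x => ‖u x‖) + ∑ n ∈ Finset.range k, fun x => ‖v n x - u x‖
  set g : α → ℝ := fun x => ‖u x‖ + ∑' n, ‖v n x - u x‖
  have hG_meas : ∀ k, AEStronglyMeasurable (G k) μ := fun k =>
    hu.1.norm.add (Finset.aestronglyMeasurable_sum _ fun n _ => ((hv n).sub hu.1).norm)
  have hG_lim : ∀ᵐ x ∂μ, Tendsto (G · x) atTop (𝓝 (g x)) := by
    filter_upwards [hsumm] with x hx
    simpa [G, Finset.sum_apply] using hx.hasSum.tendsto_sum_nat.const_add ‖u x‖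
  have hG_le : ∀ k, eLpNorm (G k) p μ ≤ eLpNorm u p μ + ∑' n, eLpNorm (v n - u) p μ := by
    intro k
    calc eLpNorm (G k) p μ
        ≤ eLpNorm (fun x => ‖u x‖) p μ
          + eLpNorm (∑ n ∈ Finset.range k, fun x => ‖v n x - u x‖) p μ :=
          eLpNorm_add_le hu.1.norm
            (Finset.aestronglyMeasurable_sum _ fun n _ => ((hv n).sub hu.1).norm) hp
      _ ≤ eLpNorm u p μ + ∑ n ∈ Finset.range k, eLpNorm (v n - u) p μ := by
          rw [eLpNorm_norm]
          gcongr
          refine (eLpNorm_sum_le (fun n _ => ((hv n).sub hu.1).norm) hp).trans_eq ?_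
          exact Finset.sum_congr rfl fun n _ => eLpNorm_norm (v n - u)
      _ ≤ _ := by gcongr; exact ENNReal.sum_le_tsum _
  refine ⟨g, ⟨aestronglyMeasurable_of_tendsto_ae _ hG_meas hG_lim,
    (Lp.eLpNorm_le_of_ae_tendsto (Eventually.of_forall hG_le) hG_meas hG_lim).trans_lt
      (ENNReal.add_lt_top.2 ⟨hu.2, hsum.lt_top⟩)⟩, fun n => ?_⟩
  filter_upwards [hsumm] with x hx
  calc ‖v n x‖ ≤ ‖u x‖ + ‖v n x - u x‖ := norm_le_insert' _ _
    _ ≤ g x := add_le_add_right (hx.le_tsum n fun _ _ => norm_nonneg _) _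

end MeasureTheory

theorem Real.rpow_le_one_add_rpow {a q s : ℝ} (ha : 0 ≤ a) (hq : 0 ≤ q) (hqs : q ≤ s) :
    a ^ q ≤ 1 + a ^ s := by
  rcases le_total a 1 with h | h
  · exact (Real.rpow_le_one ha h hq).trans (le_add_of_nonneg_right (by positivity))
  · exact (Real.rpow_le_rpow_of_exponent_le h hqs).trans (le_add_of_nonneg_left zero_le_one)

theorem ENNReal.ofReal_abs_rpow_le_one_add_abs_rpow {a b r s : ℝ} (hab : |a| ≤ |b|)
    (hr : 0 ≤ r) (hrs : r ≤ s) :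
    ENNReal.ofReal (|a| ^ r) ≤ .ofReal (1 + |b| ^ s) :=
  ENNReal.ofReal_le_ofReal <| (Real.rpow_le_one_add_rpow (abs_nonneg a) hr hrs).trans <|
    add_le_add_right (Real.rpow_le_rpow (abs_nonneg a) hab (hr.trans hrs)) 1

namespace MeasureTheory

variable {α : Type*} [MeasurableSpace α] {μ : Measure α} [IsFiniteMeasure μ] {s : ℝ}
  {q : ℕ → α → ℝ} {q₀ : α → ℝ} {v : ℕ → α → ℝ} {u g : α → ℝ}

theorem lintegral_ofReal_one_add_rpow_ne_top (hs : 0 < s) (hg : MemLp g (.ofReal s) μ) :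
    ∫⁻ x, .ofReal (1 + |g x| ^ s) ∂μ ≠ ∞ := by
  have hint := hg.integrable_norm_rpow'
  rw [ENNReal.toReal_ofReal hs.le] at hint
  exact ((integrable_const 1).add hint).lintegral_lt_top.ne

theorem lintegral_ofReal_abs_rpow_ne_top (hs : 0 < s) (hq : ∀ᵐ x ∂μ, 0 ≤ q₀ x ∧ q₀ x ≤ s)
    (hu : MemLp u (.ofReal s) μ) : ∫⁻ x, .ofReal (|u x| ^ q₀ x) ∂μ ≠ ∞ :=
  ne_top_of_le_ne_top (lintegral_ofReal_one_add_rpow_ne_top hs hu) <| lintegral_mono_ae <| by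
    filter_upwards [hq] with x hx
    exact ENNReal.ofReal_abs_rpow_le_one_add_abs_rpow le_rfl hx.1 hx.2

theorem tendsto_lintegral_ofReal_abs_rpow_of_dominated (hs : 0 < s)
    (hq_meas : ∀ n, AEMeasurable (q n) μ) (hv_meas : ∀ n, AEMeasurable (v n) μ)
    (hq : ∀ n, ∀ᵐ x ∂μ, 0 ≤ q n x ∧ q n x ≤ s)
    (hq₀ : ∀ᵐ x ∂μ, 0 < q₀ x) (hq_lim : ∀ᵐ x ∂μ, Tendsto (q · x) atTop (𝓝 (q₀ x)))
    (hv_lim : ∀ᵐ x ∂μ, Tendsto (v · x) atTop (𝓝 (u x))) (hg : MemLp g (.ofReal s) μ)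
    (hdom : ∀ n, ∀ᵐ x ∂μ, |v n x| ≤ g x) :
    Tendsto (fun n => ∫⁻ x, .ofReal (|v n x| ^ q n x) ∂μ) atTop
      (𝓝 (∫⁻ x, .ofReal (|u x| ^ q₀ x) ∂μ)) := by
  refine tendsto_lintegral_of_dominated_convergence' _
    (fun n => ENNReal.measurable_ofReal.comp_aemeasurable ((hv_meas n).abs.pow (hq_meas n)))
    (fun n => ?_) (lintegral_ofReal_one_add_rpow_ne_top hs hg) ?_
  · filter_upwards [hq n, hdom n] with x hqx hdx
    exact ENNReal.ofReal_abs_rpow_le_one_add_abs_rpow (hdx.trans (le_abs_self _)) hqx.1 hqx.2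
  · filter_upwards [hq₀, hq_lim, hv_lim] with x hq₀x hqx hvx
    exact ENNReal.tendsto_ofReal (hvx.abs.rpow hqx (Or.inr hq₀x))

end MeasureTheory

section Luxemburg

variable {N : ℕ} {Ω : Set (EuclideanSpace ℝ (Fin N))} {q : EuclideanSpace ℝ (Fin N) → ℝ}
  {w : EuclideanSpace ℝ (Fin N) → ℝ}

theorem pModular_div_le_rpow_mul (hΩ : MeasurableSet Ω) {c : ℝ} (hq : ∀ x ∈ Ω, c ≤ q x)
    {γ γ' : ℝ} (hγ' : 0 < γ') (h : γ' ≤ γ) :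
    pModular Ω q (fun x => w x / γ) ≤
      ENNReal.ofReal ((γ' / γ) ^ c) * pModular Ω q (fun x => w x / γ') := by
  have hγ : 0 < γ := hγ'.trans_le h
  have hr : 0 < γ' / γ := div_pos hγ' hγ
  rw [pModular, pModular, ← lintegral_const_mul' _ _ ENNReal.ofReal_ne_top]
  refine setLIntegral_mono_ae' hΩ (Eventually.of_forall fun x hx => ?_)
  rw [← ENNReal.ofReal_mul (by positivity)]
  refine ENNReal.ofReal_le_ofReal ?_
  have hscale : |w x / γ| = γ' / γ * |w x / γ'| := by
    rw [abs_div, abs_div, abs_of_pos hγ, abs_of_pos hγ']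
    field_simp
  rw [hscale, Real.mul_rpow hr.le (abs_nonneg _)]
  exact mul_le_mul_of_nonneg_right
    (Real.rpow_le_rpow_of_exponent_ge hr (div_le_one_of_le₀ h hγ.le) (hq x hx)) (by positivity)

theorem pModular_div_antitoneOn (hΩ : MeasurableSet Ω) (hq : ∀ x ∈ Ω, 0 ≤ q x) :
    AntitoneOn (fun γ => pModular Ω q (fun x => w x / γ)) (Set.Ioi 0) := fun γ' hγ' _ _ h =>
  (pModular_div_le_rpow_mul hΩ hq hγ' h).trans_eq (by simp)

theorem luxNorm_empty : luxNorm (∅ : Set (EuclideanSpace ℝ (Fin N))) q w = 0 := by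
  simp only [luxNorm, pModular, Measure.restrict_empty, lintegral_zero_measure, zero_le,
    and_true]
  exact csInf_Ioi

theorem luxNorm_nonneg : 0 ≤ luxNorm Ω q w :=
  Real.sInf_nonneg fun _ hγ => hγ.1.le

theorem luxNorm_le {γ : ℝ} (hγ : 0 < γ) (h : pModular Ω q (fun x => w x / γ) ≤ 1) :
    luxNorm Ω q w ≤ γ :=
  csInf_le ⟨0, fun _ hδ => hδ.1.le⟩ ⟨hγ, h⟩

theorem one_lt_pModular_div {γ : ℝ} (hγ : 0 < γ) (h : γ < luxNorm Ω q w) :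
    1 < pModular Ω q (fun x => w x / γ) :=
  lt_of_not_ge fun h' => (luxNorm_le hγ h').not_gt h

theorem le_luxNorm (hΩ : MeasurableSet Ω) (hq : ∀ x ∈ Ω, 0 ≤ q x)
    (hne : ∃ δ, 0 < δ ∧ pModular Ω q (fun x => w x / δ) ≤ 1) {γ : ℝ} (hγ : 0 < γ)
    (h : 1 < pModular Ω q (fun x => w x / γ)) : γ ≤ luxNorm Ω q w :=
  le_csInf hne fun _ hδ => le_of_not_gt fun hδγ =>
    (h.trans_le (pModular_div_antitoneOn hΩ hq hδ.1 hγ hδγ.le)).not_ge hδ.2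

theorem exists_pModular_div_le_one (hΩ : MeasurableSet Ω) {c : ℝ} (hc : 0 < c)
    (hq : ∀ x ∈ Ω, c ≤ q x) (hw : pModular Ω q w ≠ ⊤) :
    ∃ γ, 0 < γ ∧ pModular Ω q (fun x => w x / γ) ≤ 1 := by
  have hlim : Tendsto (fun γ : ℝ => .ofReal ((1 / γ) ^ c) * pModular Ω q w) atTop (𝓝 0) := by
    have h := (Real.continuousAt_rpow_const 0 c (Or.inr hc.le)).tendsto.comp
      tendsto_inv_atTop_zero
    simpa [Real.zero_rpow hc.ne'] using
      ENNReal.Tendsto.mul_const (ENNReal.tendsto_ofReal h) (Or.inr hw)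
  obtain ⟨γ, hγ, hγ1⟩ := ((hlim.eventually_lt_const one_pos).and (eventually_ge_atTop 1)).exists
  refine ⟨γ, one_pos.trans_le hγ1, (pModular_div_le_rpow_mul hΩ hq one_pos hγ1).trans ?_⟩
  simpa using hγ.le

theorem pModular_div_lt_one (hΩ : MeasurableSet Ω) {c : ℝ} (hc : 0 < c)
    (hq : ∀ x ∈ Ω, c ≤ q x) (hne : ∃ δ, 0 < δ ∧ pModular Ω q (fun x => w x / δ) ≤ 1)
    {γ : ℝ} (h : luxNorm Ω q w < γ) : pModular Ω q (fun x => w x / γ) < 1 := by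
  obtain ⟨γ', ⟨hγ', hγ'1⟩, hγ'γ⟩ := (csInf_lt_iff ⟨0, fun _ hδ => hδ.1.le⟩ hne).1 h
  have hr : γ' / γ < 1 := (div_lt_one (hγ'.trans hγ'γ)).2 hγ'γ
  calc pModular Ω q (fun x => w x / γ)
      ≤ ENNReal.ofReal ((γ' / γ) ^ c) * pModular Ω q (fun x => w x / γ') :=
        pModular_div_le_rpow_mul hΩ hq hγ' hγ'γ.le
    _ ≤ ENNReal.ofReal ((γ' / γ) ^ c) := mul_le_of_le_one_right' hγ'1
    _ < 1 := ENNReal.ofReal_lt_one.2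
        (Real.rpow_lt_one (div_pos hγ' (hγ'.trans hγ'γ)).le hr hc)

end Luxemburg

theorem tendsto_luxNorm_of_tendsto_pModular {N : ℕ} {Ω : Set (EuclideanSpace ℝ (Fin N))}
    (hΩ : MeasurableSet Ω) {q : ℕ → EuclideanSpace ℝ (Fin N) → ℝ}
    {w : ℕ → EuclideanSpace ℝ (Fin N) → ℝ} {q₀ w₀ : EuclideanSpace ℝ (Fin N) → ℝ} {c : ℝ}
    (hq : ∀ n, ∀ x ∈ Ω, 0 ≤ q n x) (hc : 0 < c) (hq₀ : ∀ x ∈ Ω, c ≤ q₀ x)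
    (hw₀ : pModular Ω q₀ w₀ ≠ ⊤)
    (hlim : ∀ γ, 0 < γ → Tendsto (fun n => pModular Ω (q n) (fun x => w n x / γ)) atTop
      (𝓝 (pModular Ω q₀ (fun x => w₀ x / γ)))) :
    Tendsto (fun n => luxNorm Ω (q n) (w n)) atTop (𝓝 (luxNorm Ω q₀ w₀)) := by
  set L := luxNorm Ω q₀ w₀
  have hne := exists_pModular_div_le_one hΩ hc hq₀ hw₀
  have hsmall : ∀ γ, L < γ → ∀ᶠ n in atTop, pModular Ω (q n) (fun x => w n x / γ) < 1 :=
    fun γ hγ => (hlim γ (luxNorm_nonneg.trans_lt hγ)).eventually_lt_const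
      (pModular_div_lt_one hΩ hc hq₀ hne hγ)
  refine tendsto_order.2 ⟨fun a ha => ?_, fun a ha => ?_⟩
  · rcases lt_or_ge a 0 with ha0 | ha0
    · exact Eventually.of_forall fun n => ha0.trans_le luxNorm_nonneg
    obtain ⟨γ, haγ, hγL⟩ := exists_between ha
    have hγ : 0 < γ := ha0.trans_lt haγ
    filter_upwards [hsmall (L + 1) (lt_add_one L),
      (hlim γ hγ).eventually_const_lt (one_lt_pModular_div hγ hγL)] with n hn hnγ
    exact haγ.trans_le <| le_luxNorm hΩ (hq n)
      ⟨L + 1, luxNorm_nonneg.trans_lt (lt_add_one L), hn.le⟩ hγ hnγ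
  · obtain ⟨γ, hLγ, hγa⟩ := exists_between ha
    filter_upwards [hsmall γ hLγ] with n hn
    exact (luxNorm_le (luxNorm_nonneg.trans_lt hLγ) hn.le).trans_lt hγa

theorem tendsto_pModular_div_of_dominated {N : ℕ} {Ω : Set (EuclideanSpace ℝ (Fin N))}
    (hΩ : MeasurableSet Ω) [IsFiniteMeasure (volume.restrict Ω)] {s : ℝ} (hs : 0 < s)
    {q : ℕ → EuclideanSpace ℝ (Fin N) → ℝ} {v : ℕ → EuclideanSpace ℝ (Fin N) → ℝ}
    {q₀ u g : EuclideanSpace ℝ (Fin N) → ℝ}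
    (hq_meas : ∀ n, AEMeasurable (q n) (volume.restrict Ω))
    (hv_meas : ∀ n, AEMeasurable (v n) (volume.restrict Ω))
    (hq : ∀ n, ∀ x ∈ Ω, 0 ≤ q n x ∧ q n x ≤ s) (hq₀ : ∀ x ∈ Ω, 0 < q₀ x)
    (hq_lim : ∀ x ∈ Ω, Tendsto (q · x) atTop (𝓝 (q₀ x)))
    (hv_lim : ∀ᵐ x ∂volume.restrict Ω, Tendsto (v · x) atTop (𝓝 (u x)))
    (hg : MemLp g (.ofReal s) (volume.restrict Ω))
    (hdom : ∀ n, ∀ᵐ x ∂volume.restrict Ω, |v n x| ≤ g x) {γ : ℝ} (hγ : 0 < γ) :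
    Tendsto (fun n => pModular Ω (q n) (fun x => v n x / γ)) atTop
      (𝓝 (pModular Ω q₀ (fun x => u x / γ))) := by
  refine tendsto_lintegral_ofReal_abs_rpow_of_dominated hs hq_meas
    (fun n => (hv_meas n).div_const γ) (fun n => ae_restrict_of_forall_mem hΩ (hq n))
    (ae_restrict_of_forall_mem hΩ hq₀)
    (ae_restrict_of_forall_mem hΩ hq_lim) (hv_lim.mono fun x hx => hx.div_const γ)
    (g := fun x => g x / γ) (by simpa only [div_eq_mul_inv] using hg.mul_const γ⁻¹)
    fun n => (hdom n).mono fun x hx => ?_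
  rw [abs_div, abs_of_pos hγ]
  exact div_le_div_of_nonneg_right hx hγ.le

theorem luxNorm_convergence_subsequence_general {N : ℕ}
    (Ω : Set (EuclideanSpace ℝ (Fin N))) (hΩopen : IsOpen Ω)
    (hΩbdd : Bornology.IsBounded Ω)
    (p : EuclideanSpace ℝ (Fin N) → ℝ)
    (ph : ℕ → EuclideanSpace ℝ (Fin N) → ℝ)
    (hph : ∀ h, InClassC Ω (ph h))
    (hpconv : ∀ x ∈ Ω, Tendsto (fun h => ph h x) atTop (𝓝 (p x)))
    (pI pS : ℝ) (hpI : 1 < pI)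
    (hbounds : ∀ h, ∀ x ∈ Ω, pI ≤ ph h x ∧ ph h x ≤ pS)
    (u : EuclideanSpace ℝ (Fin N) → ℝ)
    (uh : ℕ → EuclideanSpace ℝ (Fin N) → ℝ)
    (humem : MemLp u (ENNReal.ofReal pS) (volume.restrict Ω))
    (huhmem : ∀ h, MemLp (uh h) (ENNReal.ofReal pS) (volume.restrict Ω))
    (hstrong : Tendsto
      (fun h => eLpNorm (fun x => uh h x - u x) (ENNReal.ofReal pS) (volume.restrict Ω))
      atTop (𝓝 0)) :
    ∃ φ : ℕ → ℕ, StrictMono φ ∧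
      Tendsto (fun n => luxNorm Ω (ph (φ n)) (uh (φ n))) atTop
        (𝓝 (luxNorm Ω p u)) := by
  rcases Ω.eq_empty_or_nonempty with rfl | ⟨x₀, hx₀⟩
  · exact ⟨id, strictMono_id, by simpa only [luxNorm_empty] using tendsto_const_nhds⟩
  have hΩ := hΩopen.measurableSet
  have : IsFiniteMeasure (volume.restrict Ω) :=
    isFiniteMeasure_restrict.2 hΩbdd.measure_lt_top.ne
  have hpS : 1 ≤ pS := hpI.le.trans ((hbounds 0 x₀ hx₀).1.trans (hbounds 0 x₀ hx₀).2)
  have hph_bounds : ∀ h, ∀ x ∈ Ω, 0 ≤ ph h x ∧ ph h x ≤ pS := fun h x hx =>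
    ⟨by linarith [(hbounds h x hx).1], (hbounds h x hx).2⟩
  have hp_bounds : ∀ x ∈ Ω, pI ≤ p x ∧ p x ≤ pS := fun x hx =>
    ⟨ge_of_tendsto (hpconv x hx) (Eventually.of_forall fun h => (hbounds h x hx).1),
      le_of_tendsto (hpconv x hx) (Eventually.of_forall fun h => (hbounds h x hx).2)⟩
  obtain ⟨ψ, hψ, hsum⟩ := ENNReal.exists_strictMono_tsum_ne_top hstrong
  have hv := fun n => (huhmem (ψ n)).1
  obtain ⟨g, hg, hdom⟩ := exists_memLp_dominating_of_tsum_eLpNorm_sub_ne_top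
    (ENNReal.one_le_ofReal.2 hpS) humem hv hsum
  have hv_lim :=
    ae_tendsto_of_tsum_eLpNorm_sub_ne_top (ENNReal.one_le_ofReal.2 hpS) humem.1 hv hsum
  refine ⟨ψ, hψ, tendsto_luxNorm_of_tendsto_pModular hΩ (fun n x hx => (hph_bounds _ x hx).1)
    (by linarith) (fun x hx => (hp_bounds x hx).1) ?_ fun γ hγ => ?_⟩
  · exact lintegral_ofReal_abs_rpow_ne_top (by linarith) (ae_restrict_of_forall_mem hΩ
      fun x hx => ⟨by linarith [hp_bounds x hx], (hp_bounds x hx).2⟩) humem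
  · exact tendsto_pModular_div_of_dominated hΩ (by linarith)
      (fun n => ((hph _).1.mono subset_closure).aemeasurable hΩ) (fun n => (hv n).aemeasurable)
      (fun n => hph_bounds _) (fun x hx => by linarith [hp_bounds x hx])
      (fun x hx => (hpconv x hx).comp hψ.tendsto_atTop) hv_lim hg hdom hγ

/-- Convergence of Luxemburg norms along a subsequence under strong
`L^{p_S}`-convergence: if `p, p_h ∈ 𝒞`, `p_h → p` pointwise on `Ω` with
`1 < p_I ≤ p_h ≤ p_S < ∞` on `Ω`, and `u_h → u` strongly in the
constant-exponent space `L^{p_S}(Ω)`, then `‖u_{h_n}‖_{p_{h_n}(x)} → ‖u‖_{p(x)}`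
along a subsequence. -/
theorem luxNorm_convergence_subsequence {N : ℕ} (hN : 2 ≤ N)
    (Ω : Set (EuclideanSpace ℝ (Fin N))) (hΩopen : IsOpen Ω)
    (hΩbdd : Bornology.IsBounded Ω)
    (p : EuclideanSpace ℝ (Fin N) → ℝ)
    (ph : ℕ → EuclideanSpace ℝ (Fin N) → ℝ)
    (hp : InClassC Ω p) (hph : ∀ h, InClassC Ω (ph h))
    (hpconv : ∀ x ∈ Ω, Tendsto (fun h => ph h x) atTop (𝓝 (p x)))
    (pI pS : ℝ) (hpI : 1 < pI)
    (hbounds : ∀ h, ∀ x ∈ Ω, pI ≤ ph h x ∧ ph h x ≤ pS)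
    (u : EuclideanSpace ℝ (Fin N) → ℝ)
    (uh : ℕ → EuclideanSpace ℝ (Fin N) → ℝ)
    (humeas : Measurable u) (huhmeas : ∀ h, Measurable (uh h))
    (humem : MemLp u (ENNReal.ofReal pS) (volume.restrict Ω))
    (huhmem : ∀ h, MemLp (uh h) (ENNReal.ofReal pS) (volume.restrict Ω))
    (hstrong : Tendsto
      (fun h => eLpNorm (fun x => uh h x - u x) (ENNReal.ofReal pS) (volume.restrict Ω))
      atTop (𝓝 0)) :
    ∃ φ : ℕ → ℕ, StrictMono φ ∧
      Tendsto (fun n => luxNorm Ω (ph (φ n)) (uh (φ n))) atTop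
        (𝓝 (luxNorm Ω p u)) :=
  luxNorm_convergence_subsequence_general Ω hΩopen hΩbdd p ph hph hpconv pI pS hpI hbounds u uh
    humem huhmem hstrong
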